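/- arXiv:math/0307200 — 7 statements merged into one kernel-verified Lean document; each statement's English description precedes it below -/
import Mathlib

section
/- Let C be a monoidal category, let x, x̄ be objects, and let i : 𝟙_C ⟶ x ⊗ x̄ and e : x̄ ⊗ x ⟶ 𝟙_C be isomorphisms. Then the quadruple (x, x̄, i, e) satisfies the first zig-zag identity if and only if it satisfies the second zig-zag identity. -/
open CategoryTheory MonoidalCategory

section StmtAux

variable {C : Type*} [Category C] [MonoidalCategory C]

private theorem stmt3_idem (x xbar : C) (i : 𝟙_ C ⟶ x ⊗ xbar) (e : xbar ⊗ x ⟶ 𝟙_ C)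
    (h : i ▷ x ⊗≫ x ◁ e = (λ_ x).hom ≫ (ρ_ x).inv) :
    (xbar ◁ i ⊗≫ e ▷ xbar) ⊗≫ (xbar ◁ i ⊗≫ e ▷ xbar) = xbar ◁ i ⊗≫ e ▷ xbar := by
  calc
    _ = xbar ◁ i ⊗≫ ((e ▷ xbar ▷ 𝟙_ C) ≫ (𝟙_ C ⊗ xbar) ◁ i) ⊗≫ e ▷ xbar := by
      monoidal
    _ = 𝟙 _ ⊗≫ xbar ◁ (i ▷ 𝟙_ C ≫ (x ⊗ xbar) ◁ i) ⊗≫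
          (e ▷ (xbar ⊗ x) ≫ 𝟙_ C ◁ e) ▷ xbar ⊗≫ 𝟙 _ := by
      rw [← whisker_exchange]; monoidal
    _ = xbar ◁ i ⊗≫ xbar ◁ (i ▷ x ⊗≫ x ◁ e) ▷ xbar ⊗≫ e ▷ xbar := by
      rw [← whisker_exchange, ← whisker_exchange]; monoidal
    _ = xbar ◁ i ⊗≫ e ▷ xbar := by
      rw [h]; monoidal

private theorem stmt3_right_of_left (x xbar : C) (i : 𝟙_ C ⟶ x ⊗ xbar) (e : xbar ⊗ x ⟶ 𝟙_ C)
    [IsIso i] [IsIso e]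
    (h : (λ_ x).hom ≫ (ρ_ x).inv = (i ▷ x) ≫ (α_ x xbar x).hom ≫ (x ◁ e)) :
    (ρ_ xbar).hom ≫ (λ_ xbar).inv = (xbar ◁ i) ≫ (α_ xbar x xbar).inv ≫ (e ▷ xbar) := by
  have hz : i ▷ x ⊗≫ x ◁ e = (λ_ x).hom ≫ (ρ_ x).inv := by
    rw [h]; monoidal
  have idem := stmt3_idem x xbar i e hz
  have hiso : IsIso (xbar ◁ i ⊗≫ e ▷ xbar) := by
    dsimp [monoidalComp]; infer_instance
  have key : xbar ◁ i ≫ (α_ xbar x xbar).inv ≫ e ▷ xbar = (ρ_ xbar).hom ≫ (λ_ xbar).inv := by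
    rw [← cancel_epi ((xbar ◁ i ⊗≫ e ▷ xbar) ≫ (λ_ xbar).hom ≫ (ρ_ xbar).inv)]
    calc
      _ = (xbar ◁ i ⊗≫ e ▷ xbar) ⊗≫ (xbar ◁ i ⊗≫ e ▷ xbar) := by monoidal
      _ = xbar ◁ i ⊗≫ e ▷ xbar := idem
      _ = _ := by monoidal
  exact key.symm

end StmtAux

/-- If the unit `i : 𝟙_C ⟶ x ⊗ x̄` and counit `e : x̄ ⊗ x ⟶ 𝟙_C` are isomorphisms, then the
first zig-zag identity holds if and only if the second one does. -/
theorem stmt3 {C : Type*} [Category C] [MonoidalCategory C]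
    (x xbar : C) (i : 𝟙_ C ⟶ x ⊗ xbar) (e : xbar ⊗ x ⟶ 𝟙_ C)
    (hi : IsIso i) (he : IsIso e) :
    ((λ_ x).hom ≫ (ρ_ x).inv = (i ▷ x) ≫ (α_ x xbar x).hom ≫ (x ◁ e)) ↔
      ((ρ_ xbar).hom ≫ (λ_ xbar).inv = (xbar ◁ i) ≫ (α_ xbar x xbar).inv ≫ (e ▷ xbar)) := by
  constructor
  · exact stmt3_right_of_left x xbar i e
  · intro h2
    -- take inverses of both sides of h2 to get the first zig-zag for (xbar, x, inv e, inv i)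
    have h1' : (λ_ xbar).hom ≫ (ρ_ xbar).inv =
        (inv e ▷ xbar) ≫ (α_ xbar x xbar).hom ≫ (xbar ◁ inv i) := by
      have := IsIso.inv_eq_inv.mpr h2
      simp only [IsIso.inv_comp, IsIso.Iso.inv_hom, IsIso.Iso.inv_inv, inv_whiskerLeft,
        inv_whiskerRight, Category.assoc] at this
      simpa using this
    have h2' := stmt3_right_of_left xbar x (inv e) (inv i) h1'
    -- take inverses back
    have := IsIso.inv_eq_inv.mpr h2'
    simp only [IsIso.inv_comp, IsIso.Iso.inv_hom, IsIso.Iso.inv_inv, inv_whiskerLeft,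
      inv_whiskerRight, IsIso.inv_inv, Category.assoc] at this
    simpa using this
end

section
/- Let C be a monoidal category, x, x̄ objects, and suppose there exist isomorphisms i : 𝟙_C ≅ x ⊗ x̄ and e : x̄ ⊗ x ≅ 𝟙_C. Then there exists an isomorphism i' : 𝟙_C ≅ x ⊗ x̄ such that the quadruple (x, x̄, i'.hom, e.hom) satisfies both zig-zag identities, i.e. forms an adjoint equivalence. Consequently, in any weak 2-group (a monoidal category in which every morphism is invertible and every object has a weak inverse), every object can be equipped with an adjoint equivalence. -/
/-!
View `C` as a bicategory with one object. The isomorphisms `e⁻¹ : 𝟙 ≅ x̄ ⊗ x` and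
`i⁻¹ : x ⊗ x̄ ≅ 𝟙` make `x̄` an equivalence with inverse `x`, and the usual adjointification
replaces the counit `i⁻¹` by one satisfying the triangle identities while keeping the unit `e⁻¹`.
Inverting all 2-cells of the resulting adjoint equivalence `x̄ ⊣ x` gives an adjunction `x ⊣ x̄`
whose counit is `e`.
-/

namespace CategoryTheory.Bicategory

variable {B : Type*} [Bicategory B] {a b : B} {f : a ⟶ b} {g : b ⟶ a}

theorem leftZigzag_eq_comp (η : 𝟙 a ⟶ f ≫ g) (ϵ : g ≫ f ⟶ 𝟙 b) :
    leftZigzag η ϵ = η ▷ f ≫ (α_ f g f).hom ≫ f ◁ ϵ := by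
  bicategory

theorem rightZigzag_eq_comp (η : 𝟙 a ⟶ f ≫ g) (ϵ : g ≫ f ⟶ 𝟙 b) :
    rightZigzag η ϵ = g ◁ η ≫ (α_ g f g).inv ≫ ϵ ▷ g := by
  bicategory

def Equivalence.invAdjunction (E : a ≌ b) : E.inv ⊣ E.hom where
  unit := E.counit.inv
  counit := E.unit.inv
  left_triangle := by
    simpa only [rightZigzagIso_inv, Iso.trans_inv, Iso.symm_inv] using
      congrArg Iso.inv E.right_triangle
  right_triangle := by
    simpa only [leftZigzagIso_inv, Iso.trans_inv, Iso.symm_inv] using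
      congrArg Iso.inv E.left_triangle

end CategoryTheory.Bicategory

open CategoryTheory MonoidalCategory

/-- Improvement: given isomorphisms `i : 𝟙_C ≅ x ⊗ x̄` and `e : x̄ ⊗ x ≅ 𝟙_C`, there is an
isomorphism `i' : 𝟙_C ≅ x ⊗ x̄` such that `(x, x̄, i'.hom, e.hom)` satisfies both zig-zag
identities, i.e. forms an adjoint equivalence. -/
theorem stmt5 {C : Type*} [Category C] [MonoidalCategory C]
    (x xbar : C) (i : 𝟙_ C ≅ x ⊗ xbar) (e : xbar ⊗ x ≅ 𝟙_ C) :
    ∃ i' : 𝟙_ C ≅ x ⊗ xbar,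
      ((λ_ x).hom ≫ (ρ_ x).inv =
        (i'.hom ▷ x) ≫ (α_ x xbar x).hom ≫ (x ◁ e.hom)) ∧
      ((ρ_ xbar).hom ≫ (λ_ xbar).inv =
        (xbar ◁ i'.hom) ≫ (α_ xbar x xbar).inv ≫ (e.hom ▷ xbar)) := by
  let E := Bicategory.Equivalence.mkOfAdjointifyCounit (B := MonoidalSingleObj C)
    (a := MonoidalSingleObj.star C) (b := MonoidalSingleObj.star C) (f := xbar) (g := x)
    e.symm i.symm
  refine ⟨E.counit.symm, ?_, ?_⟩
  · exact E.invAdjunction.left_triangle.symm.trans (Bicategory.leftZigzag_eq_comp _ _)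
  · exact E.invAdjunction.right_triangle.symm.trans (Bicategory.rightZigzag_eq_comp _ _)
end

section
/- Let C be a monoidal category equipped with a functor inv : C ⥤ C and, for every object x, isomorphisms i_x : 𝟙_C ⟶ x ⊗ inv.obj x and e_x : inv.obj x ⊗ x ⟶ 𝟙_C which are natural in x, i.e. for every morphism f : x ⟶ y one has i_x ≫ (f ⊗ inv.map f) = i_y and (inv.map f ⊗ f) ≫ e_y = e_x. Then every morphism of C is an isomorphism, i.e. C is a groupoid. -/
open CategoryTheory MonoidalCategory

/-!
Naturality of `i` shows that `f ⊗ inv f` is invertible. Writing `f ⊗ inv f` as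
`(f ▷ inv x) ≫ (y ◁ inv f)` and as `(x ◁ inv f) ≫ (f ▷ inv y)`, the morphism `f ▷ inv x` is
a split mono and `f ▷ inv y` a split epi. Since `inv z ⊗ z ≅ 𝟙_ C`, whiskering on the right by
`inv z` has a left inverse up to isomorphism, namely whiskering by `z`, so it reflects split monos
and split epis. Hence `f` is both a split mono and a split epi.
-/

namespace CategoryTheory

variable {C : Type*} [Category C]

lemma isSplitMono_of_isIso_comp {X Y Z : C} (f : X ⟶ Y) (g : Y ⟶ Z) [IsIso (f ≫ g)] :
    IsSplitMono f :=
  IsSplitMono.mk' ⟨g ≫ inv (f ≫ g), by rw [← Category.assoc, IsIso.hom_inv_id]⟩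

lemma isSplitEpi_of_isIso_comp {X Y Z : C} (f : X ⟶ Y) (g : Y ⟶ Z) [IsIso (f ≫ g)] :
    IsSplitEpi g :=
  IsSplitEpi.mk' ⟨inv (f ≫ g) ≫ f, by simp⟩

section RetractionFunctor

variable {D : Type*} [Category D] {F : C ⥤ D} {G : D ⥤ C}

lemma isSplitMono_of_isSplitMono_map (N : F ⋙ G ≅ 𝟭 C) {X Y : C} (f : X ⟶ Y)
    (hf : IsSplitMono (F.map f)) : IsSplitMono f := by
  rw [show f = N.inv.app X ≫ G.map (F.map f) ≫ N.hom.app Y from (NatIso.naturality_1 N f).symm]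
  infer_instance

lemma isSplitEpi_of_isSplitEpi_map (N : F ⋙ G ≅ 𝟭 C) {X Y : C} (f : X ⟶ Y)
    (hf : IsSplitEpi (F.map f)) : IsSplitEpi f := by
  rw [show f = N.inv.app X ≫ G.map (F.map f) ≫ N.hom.app Y from (NatIso.naturality_1 N f).symm]
  infer_instance

end RetractionFunctor

variable [MonoidalCategory C]

def tensorRightCompTensorRightIso {W V : C} (u : W ⊗ V ≅ 𝟙_ C) :
    tensorRight W ⋙ tensorRight V ≅ 𝟭 C :=
  (tensorRightTensor W V).symm ≪≫ (tensoringRight C).mapIso u ≪≫ rightUnitorNatIso C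

lemma isSplitMono_of_isSplitMono_whiskerRight {W V : C} (u : W ⊗ V ≅ 𝟙_ C) {X Y : C}
    (f : X ⟶ Y) (hf : IsSplitMono (f ▷ W)) : IsSplitMono f :=
  isSplitMono_of_isSplitMono_map (F := tensorRight W) (tensorRightCompTensorRightIso u) f hf

lemma isSplitEpi_of_isSplitEpi_whiskerRight {W V : C} (u : W ⊗ V ≅ 𝟙_ C) {X Y : C}
    (f : X ⟶ Y) (hf : IsSplitEpi (f ▷ W)) : IsSplitEpi f :=
  isSplitEpi_of_isSplitEpi_map (F := tensorRight W) (tensorRightCompTensorRightIso u) f hf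

lemma isIso_of_isIso_tensorHom {X Y X' Y' V V' : C} (f : X ⟶ Y) (g : X' ⟶ Y')
    [IsIso (f ⊗ₘ g)] (u : X' ⊗ V ≅ 𝟙_ C) (v : Y' ⊗ V' ≅ 𝟙_ C) : IsIso f := by
  have : IsIso (f ▷ X' ≫ Y ◁ g) := by rwa [← MonoidalCategory.tensorHom_def]
  have : IsIso (X ◁ g ≫ f ▷ Y') := by rwa [← MonoidalCategory.tensorHom_def']
  have := isSplitMono_of_isSplitMono_whiskerRight u f (isSplitMono_of_isIso_comp _ (Y ◁ g))
  have := isSplitEpi_of_isSplitEpi_whiskerRight v f (isSplitEpi_of_isIso_comp (X ◁ g) _)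
  exact isIso_of_epi_of_isSplitMono f

end CategoryTheory

theorem stmt9_general {C : Type*} [Category C] [MonoidalCategory C]
    (inv : C ⥤ C)
    (i : ∀ x : C, 𝟙_ C ≅ x ⊗ inv.obj x)
    (e : ∀ x : C, inv.obj x ⊗ x ≅ 𝟙_ C)
    (hi : ∀ {x y : C} (f : x ⟶ y), (i x).hom ≫ (f ⊗ₘ inv.map f) = (i y).hom) :
    ∀ {x y : C} (f : x ⟶ y), IsIso f := by
  intro x y f
  have : IsIso (f ⊗ₘ inv.map f) := by
    rw [← Iso.inv_hom_id_assoc (i x) (f ⊗ₘ inv.map f), hi f]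
    infer_instance
  exact isIso_of_isIso_tensorHom f (inv.map f) (e x) (e y)

/-- If a monoidal category is equipped with an inverse functor `inv` and natural
isomorphisms `i_x : 𝟙_C ≅ x ⊗ inv x` and `e_x : inv x ⊗ x ≅ 𝟙_C`, then every morphism
is an isomorphism, i.e. the category is a groupoid. -/
theorem stmt9 {C : Type*} [Category C] [MonoidalCategory C]
    (inv : C ⥤ C)
    (i : ∀ x : C, 𝟙_ C ≅ x ⊗ inv.obj x)
    (e : ∀ x : C, inv.obj x ⊗ x ≅ 𝟙_ C)
    (hi : ∀ {x y : C} (f : x ⟶ y), (i x).hom ≫ (f ⊗ₘ inv.map f) = (i y).hom)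
    (he : ∀ {x y : C} (f : x ⟶ y), (inv.map f ⊗ₘ f) ≫ (e y).hom = (e x).hom) :
    ∀ {x y : C} (f : x ⟶ y), IsIso f :=
  stmt9_general inv i e hi
end

section
/- Let C₀ and C₁ be groups, s, t : C₁ →* C₀ and i : C₀ →* C₁ group homomorphisms with s (i a) = a and t (i a) = a for all a ∈ C₀, and suppose given a composition operation assigning to all f, g ∈ C₁ with t f = s g an element g ∘ f ∈ C₁ such that s (g ∘ f) = s f and t (g ∘ f) = t g, the unit laws i (t f) ∘ f = f and f ∘ i (s f) = f hold, and the interchange law holds: (g₁ * g₂) ∘ (f₁ * f₂) = (g₁ ∘ f₁) * (g₂ ∘ f₂) whenever t f₁ = s g₁ and t f₂ = s g₂. Then: (a) for every g ∈ C₀ and every h ∈ C₁ with s h = 1, one has s (i g * h * (i g)⁻¹) = 1 and t (i g * h * (i g)⁻¹) = g * t h * g⁻¹; and (b) for all h, h' ∈ C₁ with s h = 1 and s h' = 1, the Peiffer identity holds: i (t h) * h' * (i (t h))⁻¹ = h * h' * h⁻¹. -/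
/-- Extracting a crossed module from a strict 2-group (a category object in groups):
(a) conjugation by identities preserves the kernel of the source and acts on targets by
conjugation, and (b) the Peiffer identity holds. -/
theorem stmt11 {C₀ C₁ : Type*} [Group C₀] [Group C₁]
    (s t : C₁ →* C₀) (i : C₀ →* C₁)
    (hsi : ∀ a : C₀, s (i a) = a) (hti : ∀ a : C₀, t (i a) = a)
    (comp : ∀ (f g : C₁), t f = s g → C₁)
    (hcomps : ∀ (f g : C₁) (h : t f = s g), s (comp f g h) = s f)
    (hcompt : ∀ (f g : C₁) (h : t f = s g), t (comp f g h) = t g)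
    (hunitl : ∀ (f : C₁) (h : t f = s (i (t f))), comp f (i (t f)) h = f)
    (hunitr : ∀ (f : C₁) (h : t (i (s f)) = s f), comp (i (s f)) f h = f)
    (hinterchange : ∀ (f₁ f₂ g₁ g₂ : C₁) (h₁ : t f₁ = s g₁) (h₂ : t f₂ = s g₂)
      (h₁₂ : t (f₁ * f₂) = s (g₁ * g₂)),
      comp (f₁ * f₂) (g₁ * g₂) h₁₂ = comp f₁ g₁ h₁ * comp f₂ g₂ h₂) :
    (∀ (g : C₀) (h : C₁), s h = 1 →
      s (i g * h * (i g)⁻¹) = 1 ∧ t (i g * h * (i g)⁻¹) = g * t h * g⁻¹) ∧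
    (∀ h h' : C₁, s h = 1 → s h' = 1 →
      i (t h) * h' * (i (t h))⁻¹ = h * h' * h⁻¹) := by
  have ccong : ∀ (f f' g g' : C₁), f = f' → g = g' →
      ∀ (p : t f = s g) (p' : t f' = s g'), comp f g p = comp f' g' p' := by
    rintro f f' g g' rfl rfl p p'; rfl
  have unit1 : ∀ (g : C₁), s g = 1 → ∀ p : t 1 = s g, comp 1 g p = g := by
    intro g hg p
    have p' : t (i (s g)) = s g := by simp [hti]
    calc comp 1 g p = comp (i (s g)) g p' := ccong _ _ _ _ (by simp [hg]) rfl _ _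
      _ = g := hunitr g p'
  have A : ∀ (f g : C₁) (p : t f = s g), comp f g p = f * ((i (t f))⁻¹ * g) := by
    intro f g p
    have h₁ : t f = s (i (t f)) := by simp [hsi]
    have hg2 : s ((i (t f))⁻¹ * g) = 1 := by simp [map_mul, map_inv, hsi, ← p]
    have h₂ : t (1 : C₁) = s ((i (t f))⁻¹ * g) := by simp [hg2]
    have h₁₂ : t (f * 1) = s (i (t f) * ((i (t f))⁻¹ * g)) := by simp [p]
    have key := hinterchange f 1 (i (t f)) ((i (t f))⁻¹ * g) h₁ h₂ h₁₂
    rw [hunitl f h₁, unit1 _ hg2 h₂] at key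
    calc comp f g p = comp (f * 1) (i (t f) * ((i (t f))⁻¹ * g)) h₁₂ :=
          ccong _ _ _ _ (by group) (by group) _ _
      _ = f * ((i (t f))⁻¹ * g) := key
  have B : ∀ (f g : C₁) (p : t f = s g), comp f g p = (g * (i (t f))⁻¹) * f := by
    intro f g p
    have hg1 : s (g * (i (t f))⁻¹) = 1 := by simp [map_mul, map_inv, hsi, ← p]
    have h₁ : t (1 : C₁) = s (g * (i (t f))⁻¹) := by simp [hg1]
    have h₂ : t f = s (i (t f)) := by simp [hsi]
    have h₁₂ : t (1 * f) = s ((g * (i (t f))⁻¹) * i (t f)) := by simp [p]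
    have key := hinterchange 1 f (g * (i (t f))⁻¹) (i (t f)) h₁ h₂ h₁₂
    rw [hunitl f h₂, unit1 _ hg1 h₁] at key
    calc comp f g p = comp (1 * f) ((g * (i (t f))⁻¹) * i (t f)) h₁₂ :=
          ccong _ _ _ _ (by group) (by group) _ _
      _ = (g * (i (t f))⁻¹) * f := key
  constructor
  · intro g h hs
    constructor
    · simp [map_mul, map_inv, hsi, hs]
    · simp [map_mul, map_inv, hti, mul_assoc]
  · intro h h' hs hs'
    set f : C₁ := (i (t h))⁻¹ * h with hf
    have htf : t f = 1 := by simp [hf, map_mul, map_inv, hti]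
    have p : t f = s h' := by rw [htf, hs']
    have hone : i (t f) = 1 := by rw [htf, map_one]
    have comm : f * h' = h' * f := by
      have a := A f h' p
      have b := B f h' p
      rw [hone] at a b
      simpa using a.symm.trans b
    have comm' : (i (t h))⁻¹ * h * h' = h' * ((i (t h))⁻¹ * h) := comm
    have := congrArg (fun x => i (t h) * x * h⁻¹) comm'
    simpa [mul_assoc] using this.symm
end

section
/- Let (G, H, t, α) be a crossed module. In the semidirect product H ⋊[α] G, regard an element ⟨h, g⟩ as a morphism with source g and target t h * g, and define the composite of ⟨h, g⟩ with ⟨h', t h * g⟩ to be ⟨h' * h, g⟩. Then for all h₁, h₂, h₁', h₂' ∈ H and g₁, g₂ ∈ G, writing x₁ = ⟨h₁, g₁⟩, x₂ = ⟨h₂, g₂⟩, y₁ = ⟨h₁', t h₁ * g₁⟩, y₂ = ⟨h₂', t h₂ * g₂⟩: (a) (y₁ * y₂).right = t ((x₁ * x₂).left) * (x₁ * x₂).right, so the products x₁ * x₂ and y₁ * y₂ are again composable; and (b) the interchange law holds: ⟨(y₁ * y₂).left * (x₁ * x₂).left, (x₁ * x₂).right⟩ = ⟨h₁' * h₁, g₁⟩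 * ⟨h₂' * h₂, g₂⟩ in H ⋊[α] G. -/
/-- The interchange law for the strict 2-group built from a crossed module `(G, H, t, α)`:
in `H ⋊[α] G`, the morphism `⟨h, g⟩ : g ⟶ t h * g` composed with `⟨h', t h * g⟩` is
`⟨h' * h, g⟩`, and (a) products of composable pairs are composable, while (b) composition of
products equals the product of composites. -/
theorem stmt13 {G H : Type*} [Group G] [Group H]
    (t : H →* G) (α : G →* MulAut H)
    (hequiv : ∀ (g : G) (h : H), t (α g h) = g * t h * g⁻¹)
    (hpeiffer : ∀ h h' : H, α (t h) h' = h * h' * h⁻¹)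
    (h₁ h₂ h₁' h₂' : H) (g₁ g₂ : G) :
    (((⟨h₁', t h₁ * g₁⟩ : H ⋊[α] G) * ⟨h₂', t h₂ * g₂⟩).right =
        t (((⟨h₁, g₁⟩ : H ⋊[α] G) * ⟨h₂, g₂⟩).left) *
          ((⟨h₁, g₁⟩ : H ⋊[α] G) * ⟨h₂, g₂⟩).right) ∧
    ((⟨((⟨h₁', t h₁ * g₁⟩ : H ⋊[α] G) * ⟨h₂', t h₂ * g₂⟩).left *
          ((⟨h₁, g₁⟩ : H ⋊[α] G) * ⟨h₂, g₂⟩).left,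
        ((⟨h₁, g₁⟩ : H ⋊[α] G) * ⟨h₂, g₂⟩).right⟩ : H ⋊[α] G) =
      (⟨h₁' * h₁, g₁⟩ : H ⋊[α] G) * ⟨h₂' * h₂, g₂⟩) := by
  constructor
  · simp only [SemidirectProduct.mul_right, SemidirectProduct.mul_left, map_mul, hequiv]
    group
  · ext
    · simp only [SemidirectProduct.mul_left, map_mul, MulAut.mul_apply, hpeiffer]
      group
    · simp [SemidirectProduct.mul_right]
end

section
/- Let n ≥ 1, let G be a compact Hausdorff topological group with normalized Haar measure, let V be a real Banach space, and let ρ : G →* (V ≃L[ℝ] V) be a representation of G by continuous linear automorphisms of V such that the action map G × V → V, (g, v) ↦ ρ g v, is continuous. Suppose f : Gⁿ → V is a continuous inhomogeneous n-cocycle, i.e. f is continuous and for all g₀, g₁, …, g_n ∈ G: ρ(g₀)(f(g₁, …, g_n)) + Σ_{i=1}^{n} (−1)^i f(g₀, …, g_{i−1} * g_i, …, g_n) + (−1)^{n+1} f(g₀, …, g_{n−1}) = 0. Then f is a continuous coboundary: there exists a continuous map F : Gⁿ⁻¹ → V such that for all g₁, …, g_n ∈ G, f(g₁, …, g_n) =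 ρ(g₁)(F(g₂, …, g_n)) + Σ_{i=1}^{n−1} (−1)^i F(g₁, …, g_i * g_{i+1}, …, g_n) + (−1)^n F(g₁, …, g_{n−1}). (In other words, the continuous group cohomology Hⁿ_cont(G, V) vanishes for n ≥ 1 when G is compact and V is a real Banach G-module.) -/
/-!
Write a point of `Gⁿ⁺¹` as `(g, x)` with `x` the last coordinate. Expanding the cocycle identity
at `(g, x)` gives
`d(f(·, x))(g) + (-1)ⁿ⁺¹ (f(init g, g_last x) - f(init g, x)) + (-1)ⁿ f(g) = 0`.
Integrate in `x` against the normalised Haar measure: the bracket integrates to zero by left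
invariance, and integration commutes with `d` since `ρ(g₀)` is a continuous linear map. Hence
`f = d((-1)ⁿ⁺¹ F)` with `F(h) = ∫ f(h, x) dx`, which is continuous because `G` is compact.
-/

open MeasureTheory

namespace Fin

variable {α : Type*} {n : ℕ}

theorem tail_snoc (g : Fin (n + 1) → α) (x : α) :
    tail (snoc g x : Fin (n + 2) → α) = snoc (tail g) x := by
  funext i
  refine lastCases ?_ (fun k => ?_) i
  · simp [tail, succ_last]
  · simp [tail, succ_castSucc, -castSucc_succ]

theorem contractNth_last (op : α → α → α) (g : Fin (n + 1) → α) :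
    contractNth (last n) op g = init g := by
  funext k
  rw [contractNth_apply_of_lt _ _ _ _ (by simp), init]

theorem contractNth_castSucc_castSucc_snoc (op : α → α → α) (j : Fin n) (g : Fin (n + 1) → α)
    (x : α) :
    contractNth j.castSucc.castSucc op (snoc g x) = snoc (contractNth j.castSucc op g) x := by
  funext k
  refine lastCases ?_ (fun l => ?_) k
  · rw [contractNth_apply_of_gt _ _ _ _ (by simp)]
    simp [succ_last]
  · rw [snoc_castSucc]
    rcases lt_trichotomy (l : ℕ) j with h | h | h
    · rw [contractNth_apply_of_lt _ _ _ _ (by simpa using h),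
        contractNth_apply_of_lt _ _ _ _ (by simpa using h)]
      simp
    · rw [contractNth_apply_of_eq _ _ _ _ (by simpa using h),
        contractNth_apply_of_eq _ _ _ _ (by simpa using h)]
      simp [succ_castSucc, -castSucc_succ]
    · rw [contractNth_apply_of_gt _ _ _ _ (by simpa using h),
        contractNth_apply_of_gt _ _ _ _ (by simpa using h)]
      simp [succ_castSucc, -castSucc_succ]

theorem contractNth_castSucc_last_snoc (op : α → α → α) (g : Fin (n + 1) → α) (x : α) :
    contractNth (last n).castSucc op (snoc g x) = snoc (init g) (op (g (last n)) x) := by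
  funext k
  refine lastCases ?_ (fun l => ?_) k
  · rw [contractNth_apply_of_eq _ _ _ _ (by simp)]
    simp [succ_last]
  · rw [contractNth_apply_of_lt _ _ _ _ (by simp)]
    simp [init]

end Fin

section InhomogeneousCochains

variable {G V : Type*} [Monoid G] [AddCommGroup V] [Module ℝ V] [TopologicalSpace V]

-- Mathlib's `inhomogeneousCochains.d`, for a representation by continuous automorphisms.
def inhomogeneousDiff {n : ℕ} (ρ : G →* (V ≃L[ℝ] V)) (c : (Fin n → G) → V)
    (g : Fin (n + 1) → G) : V :=
  ρ (g 0) (c (Fin.tail g)) +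
    ∑ j : Fin (n + 1), ((-1 : ℝ) ^ ((j : ℕ) + 1)) • c (Fin.contractNth j (· * ·) g)

variable (ρ : G →* (V ≃L[ℝ] V)) {n : ℕ}

theorem inhomogeneousDiff_smul (r : ℝ) (c : (Fin n → G) → V) :
    inhomogeneousDiff ρ (r • c) = r • inhomogeneousDiff ρ c := by
  funext g
  simp only [inhomogeneousDiff, Pi.smul_apply, map_smul, smul_add, Finset.smul_sum,
    smul_comm r]

theorem inhomogeneousDiff_snoc (c : (Fin (n + 1) → G) → V) (g : Fin (n + 1) → G) (x : G) :
    inhomogeneousDiff ρ c (Fin.snoc g x) =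
      inhomogeneousDiff ρ (fun h => c (Fin.snoc h x)) g +
        ((-1 : ℝ) ^ (n + 1)) •
          (c (Fin.snoc (Fin.init g) (g (Fin.last n) * x)) - c (Fin.snoc (Fin.init g) x)) +
        ((-1 : ℝ) ^ (n + 2)) • c g := by
  simp only [inhomogeneousDiff, Fin.sum_univ_castSucc (n := n + 1),
    Fin.sum_univ_castSucc (n := n), Fin.snoc_apply_zero, Fin.tail_snoc,
    Fin.contractNth_castSucc_castSucc_snoc, Fin.contractNth_castSucc_last_snoc,
    Fin.contractNth_last, Fin.init_snoc, Fin.val_castSucc, Fin.val_last, smul_sub]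
  abel

end InhomogeneousCochains

section Integration

variable {X E : Type*} [TopologicalSpace X] [CompactSpace X] [MeasurableSpace X]
  [OpensMeasurableSpace X] [NormedAddCommGroup E] (μ : Measure X) [IsFiniteMeasure μ]

theorem Continuous.integrable_of_compactSpace {φ : X → E} (hφ : Continuous φ) :
    Integrable φ μ :=
  hφ.integrable_of_hasCompactSupport (.of_compactSpace φ)

variable [NormedSpace ℝ E]

theorem ContinuousMap.continuous_integral : Continuous fun φ : C(X, E) => ∫ x, φ x ∂μ := by
  refine LipschitzWith.continuous (K := ⟨μ.real Set.univ, measureReal_nonneg⟩)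
    (LipschitzWith.of_dist_le_mul fun φ ψ => ?_)
  rw [dist_eq_norm, ← integral_sub (φ.continuous.integrable_of_compactSpace μ)
    (ψ.continuous.integrable_of_compactSpace μ), mul_comm]
  refine norm_integral_le_of_norm_le_const (.of_forall fun x => ?_)
  rw [← dist_eq_norm]
  exact ContinuousMap.dist_apply_le_dist x

theorem continuous_parametric_integral_of_compactSpace {Y : Type*} [TopologicalSpace Y]
    {f : Y → X → E} (hf : Continuous (Function.uncurry f)) :
    Continuous fun y => ∫ x, f y x ∂μ :=
  (ContinuousMap.continuous_integral μ).comp (ContinuousMap.curry ⟨_, hf⟩).continuous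

end Integration

section Averaging

variable {G V : Type*} [NormedAddCommGroup V] [NormedSpace ℝ V]

section

variable [Monoid G] {X : Type*} [MeasurableSpace X] {μ : Measure X} (ρ : G →* (V ≃L[ℝ] V))
  {n : ℕ} {c : X → (Fin n → G) → V}

theorem integrable_inhomogeneousDiff (hc : ∀ h, Integrable (fun x => c x h) μ)
    (g : Fin (n + 1) → G) : Integrable (fun x => inhomogeneousDiff ρ (c x) g) μ :=
  ((ρ (g 0)).toContinuousLinearMap.integrable_comp (hc _)).add
    (integrable_finsetSum _ fun _ _ => (hc _).smul _)

theorem integral_inhomogeneousDiff (hc : ∀ h, Integrable (fun x => c x h) μ)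
    (g : Fin (n + 1) → G) :
    ∫ x, inhomogeneousDiff ρ (c x) g ∂μ = inhomogeneousDiff ρ (fun h => ∫ x, c x h ∂μ) g := by
  simp only [inhomogeneousDiff]
  rw [integral_add, integral_finsetSum, ContinuousLinearEquiv.integral_comp_comm]
  · simp only [integral_smul]
  · exact fun _ _ => (hc _).smul _
  · exact (ρ (g 0)).toContinuousLinearMap.integrable_comp (hc _)
  · exact integrable_finsetSum _ fun _ _ => (hc _).smul _

end

variable [MeasurableSpace G] (μ : Measure G) {n : ℕ}

noncomputable def averageLast (c : (Fin (n + 1) → G) → V) (h : Fin n → G) : V :=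
  ∫ x, c (Fin.snoc h x) ∂μ

variable [TopologicalSpace G] [CompactSpace G] [OpensMeasurableSpace G]

theorem continuous_averageLast [IsFiniteMeasure μ] {c : (Fin (n + 1) → G) → V}
    (hc : Continuous c) : Continuous (averageLast μ c) :=
  continuous_parametric_integral_of_compactSpace μ (f := fun h x => c (Fin.snoc h x))
    (by fun_prop)

theorem eq_inhomogeneousDiff_averageLast [Group G] [MeasurableMul G] [CompleteSpace V]
    [IsProbabilityMeasure μ] [μ.IsMulLeftInvariant] (ρ : G →* (V ≃L[ℝ] V))
    {c : (Fin (n + 1) → G) → V} (hc : Continuous c) (hcocycle : inhomogeneousDiff ρ c = 0) :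
    c = inhomogeneousDiff ρ (((-1 : ℝ) ^ (n + 1)) • averageLast μ c) := by
  have hint (h : Fin n → G) : Integrable (fun x => c (Fin.snoc h x)) μ :=
    Continuous.integrable_of_compactSpace μ (by fun_prop)
  funext g
  have hshift : ∫ x, c (Fin.snoc (Fin.init g) (g (Fin.last n) * x)) ∂μ =
      ∫ x, c (Fin.snoc (Fin.init g) x) ∂μ :=
    integral_mul_left_eq_self (fun x => c (Fin.snoc (Fin.init g) x)) _
  have hshifted : Integrable (fun x => c (Fin.snoc (Fin.init g) (g (Fin.last n) * x))) μ :=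
    (hint _).comp_mul_left _
  have hdiff := integrable_inhomogeneousDiff ρ hint g
  have key : inhomogeneousDiff ρ (averageLast μ c) g + ((-1 : ℝ) ^ (n + 2)) • c g = 0 := by
    calc _ = ∫ x, inhomogeneousDiff ρ c (Fin.snoc g x) ∂μ := by
          simp_rw [inhomogeneousDiff_snoc]
          rw [integral_add, integral_add, integral_inhomogeneousDiff ρ hint, integral_smul,
            integral_sub, hshift, integral_const, probReal_univ, one_smul]
          · rw [sub_self, smul_zero, add_zero]
            rfl
          exacts [hshifted, hint _, hdiff, (hshifted.sub (hint _)).smul _,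
            hdiff.add ((hshifted.sub (hint _)).smul _), integrable_const _]
      _ = 0 := by simp [hcocycle]
  rw [inhomogeneousDiff_smul, Pi.smul_apply, eq_neg_of_add_eq_zero_left key, smul_neg, smul_smul,
    ← pow_add, ← neg_smul, Odd.neg_one_pow ⟨n + 1, by ring⟩, neg_neg, one_smul]

end Averaging

theorem stmt16_general (n : ℕ) {G : Type*} [Group G] [TopologicalSpace G] [IsTopologicalGroup G]
    [CompactSpace G]
    {V : Type*} [NormedAddCommGroup V] [NormedSpace ℝ V] [CompleteSpace V]
    (ρ : G →* (V ≃L[ℝ] V))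
    (f : (Fin (n + 1) → G) → V) (hf : Continuous f)
    (hcocycle : ∀ g : Fin (n + 2) → G,
      ρ (g 0) (f (fun i => g i.succ)) +
        ∑ j : Fin (n + 2), ((-1 : ℝ) ^ ((j : ℕ) + 1)) • f (Fin.contractNth j (· * ·) g) = 0) :
    ∃ F : (Fin n → G) → V, Continuous F ∧ ∀ g : Fin (n + 1) → G,
      f g = ρ (g 0) (F (fun i => g i.succ)) +
        ∑ j : Fin (n + 1), ((-1 : ℝ) ^ ((j : ℕ) + 1)) • F (Fin.contractNth j (· * ·) g) := by
  borelize G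
  let μ := Measure.haarMeasure (⊤ : TopologicalSpace.PositiveCompacts G)
  have : IsProbabilityMeasure μ :=
    ⟨by rw [← TopologicalSpace.PositiveCompacts.coe_top]; exact Measure.haarMeasure_self⟩
  exact ⟨_, (continuous_averageLast μ hf).const_smul ((-1 : ℝ) ^ (n + 1)),
    congrFun (eq_inhomogeneousDiff_averageLast μ ρ hf (funext hcocycle))⟩

/-- Vanishing of continuous group cohomology of a compact group with coefficients in a real
Banach representation: every continuous inhomogeneous `(n+1)`-cocycle (here `n + 1 ≥ 1`) is
the coboundary of a continuous `n`-cochain.  The inhomogeneous differential of a cochain `c`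
is `(dc)(g) = ρ(g 0)(c (g ∘ succ)) + ∑ j, (-1)^(j+1) • c (Fin.contractNth j (*) g)`. -/
theorem stmt16 (n : ℕ) {G : Type*} [Group G] [TopologicalSpace G] [IsTopologicalGroup G]
    [CompactSpace G] [T2Space G]
    {V : Type*} [NormedAddCommGroup V] [NormedSpace ℝ V] [CompleteSpace V]
    (ρ : G →* (V ≃L[ℝ] V))
    (hρ : Continuous fun p : G × V => ρ p.1 p.2)
    (f : (Fin (n + 1) → G) → V) (hf : Continuous f)
    (hcocycle : ∀ g : Fin (n + 2) → G,
      ρ (g 0) (f (fun i => g i.succ)) +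
        ∑ j : Fin (n + 2), ((-1 : ℝ) ^ ((j : ℕ) + 1)) • f (Fin.contractNth j (· * ·) g) = 0) :
    ∃ F : (Fin n → G) → V, Continuous F ∧ ∀ g : Fin (n + 1) → G,
      f g = ρ (g 0) (F (fun i => g i.succ)) +
        ∑ j : Fin (n + 1), ((-1 : ℝ) ^ ((j : ℕ) + 1)) • F (Fin.contractNth j (· * ·) g) :=
  stmt16_general n ρ f hf hcocycle
end

section
/- Let C be a monoidal category whose tensor product is strictly associative and unital on objects, i.e. (x ⊗ y) ⊗ z = x ⊗ (y ⊗ z), 𝟙_C ⊗ x = x and x ⊗ 𝟙_C = x for all objects x, y, z, and suppose every object g has a chosen object g⁻¹ with g ⊗ g⁻¹ = 𝟙_C and g⁻¹ ⊗ g = 𝟙_C (so the objects form a group under ⊗). For g an object and h : 𝟙_C ⟶ 𝟙_C, define α(g)(h) : 𝟙_C ⟶ 𝟙_C as the conjugate eqToHom ≫ ((g ◁ h) ▷ g⁻¹) ≫ eqToHom of (1_g ⊗ h) ⊗ 1_{g⁻¹} along the object equalities (g ⊗ 𝟙_C) ⊗ g⁻¹ = g ⊗ g⁻¹ = 𝟙_C.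 For objects g₁, g₂, g₃, define a(g₁, g₂, g₃) : 𝟙_C ⟶ 𝟙_C as the conjugate eqToHom ≫ ((α_{g₁,g₂,g₃}).hom ▷ (g₁ ⊗ g₂ ⊗ g₃)⁻¹) ≫ eqToHom of the associator component whiskered with the chosen inverse of g₁ ⊗ g₂ ⊗ g₃, along the object equalities identifying source and target with 𝟙_C. Then the pentagon identity implies the 3-cocycle identity: for all objects g₀, g₁, g₂, g₃, α(g₀)(a(g₁, g₂, g₃)) ≫ a(g₀, g₁ ⊗ g₂, g₃) ≫ a(g₀, g₁, g₂) = a(g₀ ⊗ g₁, g₂, g₃) ≫ a(g₀, g₁, g₂ ⊗ g₃). -/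
open CategoryTheory MonoidalCategory
local infixr:70 (priority := high) " ⊗ " => MonoidalCategoryStruct.tensorObj

namespace Cocycle17Aux

variable {C : Type*} [Category C] [MonoidalCategory C]

lemma end_comm (f g : 𝟙_ C ⟶ 𝟙_ C) : f ≫ g = g ≫ f := by
  have hu : (λ_ (𝟙_ C)).inv = (ρ_ (𝟙_ C)).inv := by
    rw [Iso.inv_eq_inv]; exact unitors_equal
  have h := whisker_exchange f g
  simp only [id_whiskerLeft, MonoidalCategory.whiskerRight_id, Category.assoc,
    unitors_equal, hu, Iso.inv_hom_id_assoc] at h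
  have h2 := congrArg (fun t => (ρ_ (𝟙_ C)).inv ≫ t ≫ (ρ_ (𝟙_ C)).hom) h
  simp only [Category.assoc, Iso.inv_hom_id, Category.comp_id, Iso.inv_hom_id_assoc] at h2
  exact h2.symm

/-- transport a morphism between invertible objects to an endomorphism of the unit. -/
def Tr {x x' : C} (w : C) (h : x ⊗ w = 𝟙_ C) (h' : x' ⊗ w = 𝟙_ C) (f : x ⟶ x') :
    𝟙_ C ⟶ 𝟙_ C :=
  eqToHom h.symm ≫ (f ▷ w) ≫ eqToHom h'

lemma Tr_comp {x x' x'' : C} {w : C} (h : x ⊗ w = 𝟙_ C) (h' : x' ⊗ w = 𝟙_ C)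
    (h'' : x'' ⊗ w = 𝟙_ C) (f : x ⟶ x') (g : x' ⟶ x'') :
    Tr w h h'' (f ≫ g) = Tr w h h' f ≫ Tr w h' h'' g := by
  simp [Tr]

lemma Tr_w_irrel {x x' : C} {w w' : C} (e : w = w') (h : x ⊗ w = 𝟙_ C)
    (h' : x' ⊗ w = 𝟙_ C) (h₂ : x ⊗ w' = 𝟙_ C) (h₂' : x' ⊗ w' = 𝟙_ C) (f : x ⟶ x') :
    Tr w h h' f = Tr w' h₂ h₂' f := by
  subst e; rfl

lemma Tr_conj {x x' y y' : C} {w : C} (e : x = y) (e' : x' = y')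
    (h : x ⊗ w = 𝟙_ C) (h' : x' ⊗ w = 𝟙_ C) (hy : y ⊗ w = 𝟙_ C) (hy' : y' ⊗ w = 𝟙_ C)
    (f : x ⟶ x') :
    Tr w h h' f = Tr w hy hy' (eqToHom e.symm ≫ f ≫ eqToHom e') := by
  subst e; subst e'; simp [Tr]

lemma Tr_conj' {x x' y y' : C} {w : C} (e : y = x) (e' : x' = y')
    (h : y ⊗ w = 𝟙_ C) (h' : y' ⊗ w = 𝟙_ C) (hy : x ⊗ w = 𝟙_ C) (hy' : x' ⊗ w = 𝟙_ C)
    (f : x ⟶ x') :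
    Tr w h h' (eqToHom e ≫ f ≫ eqToHom e') = Tr w hy hy' f := by
  subst e; subst e'; simp [Tr]

lemma conj_cancel {a b : C} (p : 𝟙_ C = a) (q : b = 𝟙_ C) (i : a ≅ b)
    (u : 𝟙_ C ⟶ 𝟙_ C) (p' : 𝟙_ C = b) (q' : a = 𝟙_ C) :
    (eqToHom p ≫ i.hom ≫ eqToHom q) ≫ u ≫ (eqToHom p' ≫ i.inv ≫ eqToHom q') = u := by
  have hBA : (eqToHom p' ≫ i.inv ≫ eqToHom q') ≫ (eqToHom p ≫ i.hom ≫ eqToHom q) = 𝟙 _ := by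
    simp
  calc (eqToHom p ≫ i.hom ≫ eqToHom q) ≫ u ≫ (eqToHom p' ≫ i.inv ≫ eqToHom q')
      = (eqToHom p ≫ i.hom ≫ eqToHom q) ≫ (u ≫ (eqToHom p' ≫ i.inv ≫ eqToHom q')) := by
        simp
    _ = (u ≫ (eqToHom p' ≫ i.inv ≫ eqToHom q')) ≫ (eqToHom p ≫ i.hom ≫ eqToHom q) :=
        end_comm _ _
    _ = u ≫ ((eqToHom p' ≫ i.inv ≫ eqToHom q') ≫ (eqToHom p ≫ i.hom ≫ eqToHom q)) := by
        simp
    _ = u := by rw [hBA, Category.comp_id]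

lemma Tr_whiskerRight {x x' z w : C} (e : x = x') (f : x ⟶ x')
    (h : (x ⊗ z) ⊗ w = 𝟙_ C) (h' : (x' ⊗ z) ⊗ w = 𝟙_ C)
    (h₂ : x ⊗ (z ⊗ w) = 𝟙_ C) (h₂' : x' ⊗ (z ⊗ w) = 𝟙_ C) :
    Tr w h h' (f ▷ z) = Tr (z ⊗ w) h₂ h₂' f := by
  subst e
  have nat : (f ▷ z) ▷ w = (α_ x z w).hom ≫ (f ▷ (z ⊗ w)) ≫ (α_ x z w).inv := by
    rw [whiskerRight_tensor]; simp
  show eqToHom h.symm ≫ ((f ▷ z) ▷ w) ≫ eqToHom h' = _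
  rw [nat]
  have := conj_cancel (C := C) h.symm h₂ (α_ x z w)
    (Tr (z ⊗ w) h₂ h₂' f) h₂.symm h'
  calc eqToHom h.symm ≫ ((α_ x z w).hom ≫ (f ▷ (z ⊗ w)) ≫ (α_ x z w).inv) ≫ eqToHom h'
      = (eqToHom h.symm ≫ (α_ x z w).hom ≫ eqToHom h₂) ≫
          (eqToHom h₂.symm ≫ (f ▷ (z ⊗ w)) ≫ eqToHom h₂') ≫
          (eqToHom h₂'.symm ≫ (α_ x z w).inv ≫ eqToHom h') := by simp
    _ = Tr (z ⊗ w) h₂ h₂' f := by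
        have hpq : eqToHom (h₂' : x ⊗ (z ⊗ w) = 𝟙_ C).symm = eqToHom h₂.symm := rfl
        rw [show (eqToHom h₂'.symm : (𝟙_ C : C) ⟶ _) = eqToHom h₂.symm from rfl]
        exact conj_cancel h.symm h₂ (α_ x z w) (Tr (z ⊗ w) h₂ h₂' f) h₂.symm h'

lemma Tr_whiskerMiddle {x z z' w v : C} (e : z = z') (u : z ⟶ z')
    (h : (x ⊗ (z ⊗ w)) ⊗ v = 𝟙_ C) (h' : (x ⊗ (z' ⊗ w)) ⊗ v = 𝟙_ C)
    (h₃ : ((x ⊗ z) ⊗ w) ⊗ v = 𝟙_ C) (h₃' : ((x ⊗ z') ⊗ w) ⊗ v = 𝟙_ C)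
    (h₂ : (x ⊗ z) ⊗ (w ⊗ v) = 𝟙_ C) (h₂' : (x ⊗ z') ⊗ (w ⊗ v) = 𝟙_ C) :
    Tr v h h' (x ◁ (u ▷ w)) = Tr (w ⊗ v) h₂ h₂' (x ◁ u) := by
  subst e
  have nat : (x ◁ (u ▷ w)) ▷ v =
      ((α_ x z w).inv ▷ v) ≫ (((x ◁ u) ▷ w) ▷ v) ≫ ((α_ x z w).hom ▷ v) := by
    rw [whisker_assoc]; simp
  show eqToHom h.symm ≫ (x ◁ (u ▷ w)) ▷ v ≫ eqToHom h' = _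
  rw [nat]
  calc eqToHom h.symm ≫
        (((α_ x z w).inv ▷ v) ≫ (((x ◁ u) ▷ w) ▷ v) ≫ ((α_ x z w).hom ▷ v)) ≫ eqToHom h'
      = (eqToHom h.symm ≫ (whiskerRightIso (α_ x z w).symm v).hom ≫ eqToHom h₃) ≫
          (eqToHom h₃.symm ≫ (((x ◁ u) ▷ w) ▷ v) ≫ eqToHom h₃') ≫
          (eqToHom h₃'.symm ≫ (whiskerRightIso (α_ x z w).symm v).inv ≫ eqToHom h') := by
        simp [whiskerRightIso]
    _ = Tr v h₃ h₃' ((x ◁ u) ▷ w) := by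
        rw [show (eqToHom h₃'.symm : (𝟙_ C : C) ⟶ _) = eqToHom h₃.symm from rfl,
          show (eqToHom h' : _ ⟶ (𝟙_ C : C)) = eqToHom h from rfl]
        exact conj_cancel h.symm h₃ (whiskerRightIso (α_ x z w).symm v)
          (Tr v h₃ h₃' ((x ◁ u) ▷ w)) h₃.symm h
    _ = Tr (w ⊗ v) h₂ h₂' (x ◁ u) := Tr_whiskerRight rfl (x ◁ u) h₃ h₃' h₂ h₂'


end Cocycle17Aux

open Cocycle17Aux


variable {C : Type*} [Category C] [MonoidalCategory C]

/-- In a monoidal category whose tensor product is strictly associative and unital on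
objects, with chosen strict inverse objects, the conjugation action of an object `g` on
endomorphisms of the unit object: `eqToHom ≫ ((g ◁ h) ▷ g⁻¹) ≫ eqToHom`. -/
def conjAct (ginv : C → C)
    (hr : ∀ x : C, x ⊗ 𝟙_ C = x) (hinv : ∀ g : C, g ⊗ ginv g = 𝟙_ C)
    (g : C) (h : 𝟙_ C ⟶ 𝟙_ C) : 𝟙_ C ⟶ 𝟙_ C :=
  eqToHom (show (𝟙_ C : C) = (g ⊗ 𝟙_ C) ⊗ ginv g by rw [hr g, hinv g]) ≫
    ((g ◁ h) ▷ ginv g) ≫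
    eqToHom (show ((g ⊗ 𝟙_ C) ⊗ ginv g : C) = 𝟙_ C by rw [hr g, hinv g])

/-- The associator transported to an endomorphism of the unit object by whiskering with the
chosen inverse of `g₁ ⊗ g₂ ⊗ g₃`: `eqToHom ≫ ((α_ g₁ g₂ g₃).hom ▷ (g₁ ⊗ g₂ ⊗ g₃)⁻¹) ≫
eqToHom`. -/
def assocCocycle (ginv : C → C)
    (hassoc : ∀ x y z : C, (x ⊗ y) ⊗ z = x ⊗ (y ⊗ z))
    (hinv : ∀ g : C, g ⊗ ginv g = 𝟙_ C)
    (g₁ g₂ g₃ : C) : 𝟙_ C ⟶ 𝟙_ C :=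
  eqToHom (show (𝟙_ C : C) = ((g₁ ⊗ g₂) ⊗ g₃) ⊗ ginv (g₁ ⊗ g₂ ⊗ g₃) by
      rw [hassoc g₁ g₂ g₃, hinv (g₁ ⊗ g₂ ⊗ g₃)]) ≫
    ((α_ g₁ g₂ g₃).hom ▷ ginv (g₁ ⊗ g₂ ⊗ g₃)) ≫
    eqToHom (show ((g₁ ⊗ g₂ ⊗ g₃) ⊗ ginv (g₁ ⊗ g₂ ⊗ g₃) : C) = 𝟙_ C by
      rw [hinv (g₁ ⊗ g₂ ⊗ g₃)])

set_option maxHeartbeats 1000000 in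
/-- The pentagon identity implies the group-cohomology 3-cocycle identity for the associator
of a skeletal special 2-group. -/
theorem stmt17 (ginv : C → C)
    (hassoc : ∀ x y z : C, (x ⊗ y) ⊗ z = x ⊗ (y ⊗ z))
    (hl : ∀ x : C, 𝟙_ C ⊗ x = x) (hr : ∀ x : C, x ⊗ 𝟙_ C = x)
    (hinv : ∀ g : C, g ⊗ ginv g = 𝟙_ C) (hinv' : ∀ g : C, ginv g ⊗ g = 𝟙_ C)
    (g₀ g₁ g₂ g₃ : C) :
    conjAct ginv hr hinv g₀ (assocCocycle ginv hassoc hinv g₁ g₂ g₃) ≫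
        assocCocycle ginv hassoc hinv g₀ (g₁ ⊗ g₂) g₃ ≫
        assocCocycle ginv hassoc hinv g₀ g₁ g₂ =
      assocCocycle ginv hassoc hinv (g₀ ⊗ g₁) g₂ g₃ ≫
        assocCocycle ginv hassoc hinv g₀ g₁ (g₂ ⊗ g₃) := by
  have huniq : ∀ x w w' : C, x ⊗ w = 𝟙_ C → x ⊗ w' = 𝟙_ C → w = w' := by
    intro x w w' hw hw'
    calc w = 𝟙_ C ⊗ w := (hl w).symm
      _ = (ginv x ⊗ x) ⊗ w := by rw [hinv']
      _ = ginv x ⊗ (x ⊗ w) := hassoc ..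
      _ = ginv x ⊗ (x ⊗ w') := by rw [hw, hw']
      _ = (ginv x ⊗ x) ⊗ w' := (hassoc ..).symm
      _ = 𝟙_ C ⊗ w' := by rw [hinv']
      _ = w' := hl w'
  have hmul : ∀ u z : C, (u ⊗ z) ⊗ (ginv z ⊗ ginv u) = 𝟙_ C := by
    intro u z
    rw [← hassoc (u ⊗ z) (ginv z) (ginv u), hassoc u z (ginv z), hinv, hr, hinv]
  have base : ∀ a b c : C, assocCocycle ginv hassoc hinv a b c =
      Tr (ginv (a ⊗ b ⊗ c))
        (show ((a ⊗ b) ⊗ c) ⊗ ginv (a ⊗ b ⊗ c) = 𝟙_ C by rw [hassoc a b c, hinv])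
        (hinv (a ⊗ b ⊗ c)) (α_ a b c).hom := fun _ _ _ => rfl
  obtain ⟨W, hX⟩ : ∃ w, ((((g₀ ⊗ g₁) ⊗ g₂) ⊗ g₃) : C) ⊗ w = 𝟙_ C := ⟨ginv _, hinv _⟩
  have hOW : ∀ y : C, y = ((g₀ ⊗ g₁) ⊗ g₂) ⊗ g₃ → y ⊗ W = 𝟙_ C := fun y e => by
    rw [e]; exact hX
  have hY1 : ((g₀ ⊗ (g₁ ⊗ g₂)) ⊗ g₃) ⊗ W = 𝟙_ C := hOW ((g₀ ⊗ (g₁ ⊗ g₂)) ⊗ g₃) (by simp only [hassoc])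
  have hY2 : (g₀ ⊗ ((g₁ ⊗ g₂) ⊗ g₃)) ⊗ W = 𝟙_ C := hOW (g₀ ⊗ ((g₁ ⊗ g₂) ⊗ g₃)) (by simp only [hassoc])
  have hY3 : (g₀ ⊗ (g₁ ⊗ (g₂ ⊗ g₃))) ⊗ W = 𝟙_ C := hOW (g₀ ⊗ (g₁ ⊗ (g₂ ⊗ g₃))) (by simp only [hassoc])
  have hY4 : ((g₀ ⊗ g₁) ⊗ (g₂ ⊗ g₃)) ⊗ W = 𝟙_ C := hOW ((g₀ ⊗ g₁) ⊗ (g₂ ⊗ g₃)) (by simp only [hassoc])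
  -- claim 1
  have c1 : assocCocycle ginv hassoc hinv g₀ g₁ g₂ =
      Tr W hX hY1 ((α_ g₀ g₁ g₂).hom ▷ g₃) := by
    have p2 : (((g₀ ⊗ g₁) ⊗ g₂)) ⊗ (g₃ ⊗ W) = 𝟙_ C := by
      have t := hX; simp only [hassoc] at t ⊢; exact t
    have p2' : ((g₀ ⊗ (g₁ ⊗ g₂))) ⊗ (g₃ ⊗ W) = 𝟙_ C := by
      have t := hX; simp only [hassoc] at t ⊢; exact t
    have ew1 : ginv (g₀ ⊗ g₁ ⊗ g₂) = g₃ ⊗ W := huniq _ _ _ (hinv _) p2'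
    calc assocCocycle ginv hassoc hinv g₀ g₁ g₂
        = Tr (ginv (g₀ ⊗ g₁ ⊗ g₂)) _ (hinv _) (α_ g₀ g₁ g₂).hom := base g₀ g₁ g₂
      _ = Tr (g₃ ⊗ W) p2 p2' (α_ g₀ g₁ g₂).hom := Tr_w_irrel ew1 _ _ p2 p2' _
      _ = Tr W hX hY1 ((α_ g₀ g₁ g₂).hom ▷ g₃) :=
          (Tr_whiskerRight (hassoc g₀ g₁ g₂) _ hX hY1 p2 p2').symm
  -- claim 2
  have c2 : assocCocycle ginv hassoc hinv g₀ (g₁ ⊗ g₂) g₃ =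
      Tr W hY1 hY2 (α_ g₀ (g₁ ⊗ g₂) g₃).hom := by
    have ew2 : ginv (g₀ ⊗ (g₁ ⊗ g₂) ⊗ g₃) = W := huniq _ _ _ (hinv _) hY2
    calc assocCocycle ginv hassoc hinv g₀ (g₁ ⊗ g₂) g₃
        = Tr (ginv (g₀ ⊗ (g₁ ⊗ g₂) ⊗ g₃)) _ (hinv _) (α_ g₀ (g₁ ⊗ g₂) g₃).hom :=
          base g₀ (g₁ ⊗ g₂) g₃
      _ = Tr W hY1 hY2 (α_ g₀ (g₁ ⊗ g₂) g₃).hom := Tr_w_irrel ew2 _ _ hY1 hY2 _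
  -- claim 4
  have c4 : assocCocycle ginv hassoc hinv (g₀ ⊗ g₁) g₂ g₃ =
      Tr W hX hY4 (α_ (g₀ ⊗ g₁) g₂ g₃).hom := by
    have ew4 : ginv ((g₀ ⊗ g₁) ⊗ g₂ ⊗ g₃) = W := huniq _ _ _ (hinv _) hY4
    calc assocCocycle ginv hassoc hinv (g₀ ⊗ g₁) g₂ g₃
        = Tr (ginv ((g₀ ⊗ g₁) ⊗ g₂ ⊗ g₃)) _ (hinv _) (α_ (g₀ ⊗ g₁) g₂ g₃).hom :=
          base (g₀ ⊗ g₁) g₂ g₃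
      _ = Tr W hX hY4 (α_ (g₀ ⊗ g₁) g₂ g₃).hom := Tr_w_irrel ew4 _ _ hX hY4 _
  -- claim 5
  have c5 : assocCocycle ginv hassoc hinv g₀ g₁ (g₂ ⊗ g₃) =
      Tr W hY4 hY3 (α_ g₀ g₁ (g₂ ⊗ g₃)).hom := by
    have ew5 : ginv (g₀ ⊗ g₁ ⊗ (g₂ ⊗ g₃)) = W := huniq _ _ _ (hinv _) hY3
    calc assocCocycle ginv hassoc hinv g₀ g₁ (g₂ ⊗ g₃)
        = Tr (ginv (g₀ ⊗ g₁ ⊗ (g₂ ⊗ g₃))) _ (hinv _) (α_ g₀ g₁ (g₂ ⊗ g₃)).hom :=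
          base g₀ g₁ (g₂ ⊗ g₃)
      _ = Tr W hY4 hY3 (α_ g₀ g₁ (g₂ ⊗ g₃)).hom := Tr_w_irrel ew5 _ _ hY4 hY3 _
  -- claim 3
  have c3 : conjAct ginv hr hinv g₀ (assocCocycle ginv hassoc hinv g₁ g₂ g₃) =
      Tr W hY2 hY3 (g₀ ◁ (α_ g₁ g₂ g₃).hom) := by
    have pC : (g₀ ⊗ 𝟙_ C) ⊗ ginv g₀ = 𝟙_ C := by rw [hr, hinv]
    have pS : ((g₁ ⊗ g₂) ⊗ g₃) ⊗ ginv (g₁ ⊗ g₂ ⊗ g₃) = 𝟙_ C := by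
      rw [hassoc g₁ g₂ g₃, hinv]
    have eL : (g₀ ⊗ 𝟙_ C : C) = g₀ ⊗ (((g₁ ⊗ g₂) ⊗ g₃) ⊗ ginv (g₁ ⊗ g₂ ⊗ g₃)) := by
      rw [pS]
    have eR : (g₀ ⊗ ((g₁ ⊗ g₂ ⊗ g₃) ⊗ ginv (g₁ ⊗ g₂ ⊗ g₃)) : C) = g₀ ⊗ 𝟙_ C := by
      rw [hinv]
    have qa : (g₀ ⊗ (((g₁ ⊗ g₂) ⊗ g₃) ⊗ ginv (g₁ ⊗ g₂ ⊗ g₃))) ⊗ ginv g₀ = 𝟙_ C := by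
      rw [hassoc g₁ g₂ g₃, hinv, hr, hinv]
    have qa' : (g₀ ⊗ ((g₁ ⊗ (g₂ ⊗ g₃)) ⊗ ginv (g₁ ⊗ g₂ ⊗ g₃))) ⊗ ginv g₀ = 𝟙_ C := by
      rw [hinv, hr, hinv]
    have h₃ : ((g₀ ⊗ ((g₁ ⊗ g₂) ⊗ g₃)) ⊗ ginv (g₁ ⊗ g₂ ⊗ g₃)) ⊗ ginv g₀ = 𝟙_ C := by
      rw [hassoc g₀ ((g₁ ⊗ g₂) ⊗ g₃) (ginv (g₁ ⊗ g₂ ⊗ g₃))]; exact qa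
    have h₃' : ((g₀ ⊗ (g₁ ⊗ (g₂ ⊗ g₃))) ⊗ ginv (g₁ ⊗ g₂ ⊗ g₃)) ⊗ ginv g₀ = 𝟙_ C := by
      rw [hassoc g₀ (g₁ ⊗ (g₂ ⊗ g₃)) (ginv (g₁ ⊗ g₂ ⊗ g₃))]; exact qa'
    have q2 : (g₀ ⊗ ((g₁ ⊗ g₂) ⊗ g₃)) ⊗ (ginv (g₁ ⊗ g₂ ⊗ g₃) ⊗ ginv g₀) = 𝟙_ C := by
      rw [hassoc g₁ g₂ g₃]; exact hmul g₀ (g₁ ⊗ (g₂ ⊗ g₃))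
    have q2' : (g₀ ⊗ (g₁ ⊗ (g₂ ⊗ g₃))) ⊗ (ginv (g₁ ⊗ g₂ ⊗ g₃) ⊗ ginv g₀) = 𝟙_ C :=
      hmul g₀ (g₁ ⊗ (g₂ ⊗ g₃))
    have ew : ginv (g₁ ⊗ g₂ ⊗ g₃) ⊗ ginv g₀ = W := by
      refine huniq (((g₀ ⊗ g₁) ⊗ g₂) ⊗ g₃) _ _ ?_ hX
      calc (((g₀ ⊗ g₁) ⊗ g₂) ⊗ g₃) ⊗ (ginv (g₁ ⊗ g₂ ⊗ g₃) ⊗ ginv g₀)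
          = (g₀ ⊗ (g₁ ⊗ (g₂ ⊗ g₃))) ⊗ (ginv (g₁ ⊗ g₂ ⊗ g₃) ⊗ ginv g₀) := by
            simp only [hassoc]
        _ = 𝟙_ C := hmul g₀ (g₁ ⊗ (g₂ ⊗ g₃))
    have hstep : g₀ ◁ (assocCocycle ginv hassoc hinv g₁ g₂ g₃) =
        eqToHom eL ≫ (g₀ ◁ ((α_ g₁ g₂ g₃).hom ▷ ginv (g₁ ⊗ g₂ ⊗ g₃))) ≫ eqToHom eR := by
      rw [show assocCocycle ginv hassoc hinv g₁ g₂ g₃ =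
          eqToHom pS.symm ≫ ((α_ g₁ g₂ g₃).hom ▷ ginv (g₁ ⊗ g₂ ⊗ g₃)) ≫
            eqToHom (hinv (g₁ ⊗ g₂ ⊗ g₃)) from rfl,
        MonoidalCategory.whiskerLeft_comp, MonoidalCategory.whiskerLeft_comp, whiskerLeft_eqToHom, whiskerLeft_eqToHom]
    calc conjAct ginv hr hinv g₀ (assocCocycle ginv hassoc hinv g₁ g₂ g₃)
        = Tr (ginv g₀) pC pC (g₀ ◁ (assocCocycle ginv hassoc hinv g₁ g₂ g₃)) := rfl
      _ = Tr (ginv g₀) pC pC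
            (eqToHom eL ≫ (g₀ ◁ ((α_ g₁ g₂ g₃).hom ▷ ginv (g₁ ⊗ g₂ ⊗ g₃))) ≫
              eqToHom eR) := by rw [hstep]
      _ = Tr (ginv g₀) qa qa' (g₀ ◁ ((α_ g₁ g₂ g₃).hom ▷ ginv (g₁ ⊗ g₂ ⊗ g₃))) :=
          Tr_conj' eL eR pC pC qa qa' _
      _ = Tr (ginv (g₁ ⊗ g₂ ⊗ g₃) ⊗ ginv g₀) q2 q2' (g₀ ◁ (α_ g₁ g₂ g₃).hom) :=
          Tr_whiskerMiddle (hassoc g₁ g₂ g₃) _ qa qa' h₃ h₃' q2 q2'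
      _ = Tr W hY2 hY3 (g₀ ◁ (α_ g₁ g₂ g₃).hom) := Tr_w_irrel ew _ _ hY2 hY3 _
  have comm3 : ∀ u v t : 𝟙_ C ⟶ 𝟙_ C, u ≫ v ≫ t = t ≫ v ≫ u := by
    intro u v t
    rw [end_comm v t, ← Category.assoc, end_comm u t, Category.assoc, end_comm u v]
  calc conjAct ginv hr hinv g₀ (assocCocycle ginv hassoc hinv g₁ g₂ g₃) ≫
        assocCocycle ginv hassoc hinv g₀ (g₁ ⊗ g₂) g₃ ≫
        assocCocycle ginv hassoc hinv g₀ g₁ g₂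
      = Tr W hY2 hY3 (g₀ ◁ (α_ g₁ g₂ g₃).hom) ≫
          Tr W hY1 hY2 (α_ g₀ (g₁ ⊗ g₂) g₃).hom ≫
          Tr W hX hY1 ((α_ g₀ g₁ g₂).hom ▷ g₃) := by rw [c1, c2, c3]
    _ = Tr W hX hY1 ((α_ g₀ g₁ g₂).hom ▷ g₃) ≫
          Tr W hY1 hY2 (α_ g₀ (g₁ ⊗ g₂) g₃).hom ≫
          Tr W hY2 hY3 (g₀ ◁ (α_ g₁ g₂ g₃).hom) := comm3 _ _ _
    _ = Tr W hX hY3 ((α_ g₀ g₁ g₂).hom ▷ g₃ ≫ (α_ g₀ (g₁ ⊗ g₂) g₃).hom ≫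
          g₀ ◁ (α_ g₁ g₂ g₃).hom) := by
        rw [Tr_comp hX hY1 hY3, Tr_comp hY1 hY2 hY3]
    _ = Tr W hX hY3 ((α_ (g₀ ⊗ g₁) g₂ g₃).hom ≫ (α_ g₀ g₁ (g₂ ⊗ g₃)).hom) := by
        rw [pentagon]
    _ = Tr W hX hY4 (α_ (g₀ ⊗ g₁) g₂ g₃).hom ≫
          Tr W hY4 hY3 (α_ g₀ g₁ (g₂ ⊗ g₃)).hom := Tr_comp hX hY4 hY3 _ _
    _ = assocCocycle ginv hassoc hinv (g₀ ⊗ g₁) g₂ g₃ ≫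
          assocCocycle ginv hassoc hinv g₀ g₁ (g₂ ⊗ g₃) := by rw [c4, c5]
end
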